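/- Let T be a finite tree (a finite connected acyclic simple graph) in which every vertex has degree 1 or degree 3, equipped with an orientation of its edges (for each pair of adjacent vertices u, v, exactly one of the directed edges u→v or v→u is chosen). Assume that every degree-3 vertex has at least one incoming and at least one outgoing edge (so its in-degree is 1 or 2). If T has at least one vertex of degree 3, then there exists a degree-3 vertex v such that either v has out-degree 2 and at least one out-neighbor of v is a leaf, or v has in-degree 2 and at least one in-neighbor of v is a leaf. (This is the combinatorial content of the paper's Lemma that, whenever there are tiles of type T₃, there is a down saddle connected below to a min tile or an up saddle connected above to a max tile.) -/

import Mathlib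

/-!
Since a tree on `n` vertices has `n - 1` edges, `∑ (deg v - 2) = -2`; with all degrees in `{1, 3}`
this says there are two more leaves than trivalent vertices. The neighbour of a leaf is trivalent
(otherwise the tree is a single edge), so by pigeonhole some trivalent vertex `v` carries two
leaves. The in- and out-degree of `v` are `1` and `2` in some order, and the two edges on the
side of degree `2` cannot both avoid the two leaves among the three neighbours of `v`.
-/

open SimpleGraph Finset

namespace SimpleGraph

variable {V : Type*} {G : SimpleGraph V}

theorem Preconnected.mem_of_forall_adj_mem (hG : G.Preconnected) {S : Set V}
    (hS : ∀ x ∈ S, ∀ y, G.Adj x y → y ∈ S) {a : V} (ha : a ∈ S) (b : V) : b ∈ S := by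
  obtain ⟨p⟩ := hG a b
  induction p with
  | nil => exact ha
  | cons h _ ih => exact ih (hS _ ha _ h)

theorem Connected.eq_or_eq_of_adj_of_degree_eq_one [Fintype V] [DecidableRel G.Adj]
    (hG : G.Connected) {u v : V} (huv : G.Adj u v) (hu : G.degree u = 1) (hv : G.degree v = 1)
    (w : V) : w = u ∨ w = v := by
  obtain ⟨a, -, ha⟩ := degree_eq_one_iff_existsUnique_adj.mp hu
  obtain ⟨b, -, hb⟩ := degree_eq_one_iff_existsUnique_adj.mp hv
  have hS : ∀ x ∈ ({u, v} : Set V), ∀ y, G.Adj x y → y ∈ ({u, v} : Set V) := by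
    rintro x (rfl | rfl) y hxy
    · exact Or.inr ((ha y hxy).trans (ha v huv).symm)
    · exact Or.inl ((hb y hxy).trans (hb u huv.symm).symm)
  exact hG.preconnected.mem_of_forall_adj_mem hS (Set.mem_insert u _) w

variable [Fintype V] [DecidableRel G.Adj]

theorem IsTree.sum_degree_sub_two (hT : G.IsTree) : ∑ v, ((G.degree v : ℤ) - 2) = -2 := by
  have hsum := G.sum_degrees_eq_twice_card_edges
  have hedges := hT.card_edgeFinset
  rw [sum_sub_distrib, ← Nat.cast_sum, hsum, sum_const, card_univ, ← hedges]
  push_cast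
  ring

theorem IsTree.card_degree_eq_one_of_degree_mem (hT : G.IsTree)
    (hdeg : ∀ v, G.degree v = 1 ∨ G.degree v = 3) :
    #{v | G.degree v = 1} = #{v | G.degree v = 3} + 2 := by
  have hpt : ∀ v, (G.degree v : ℤ) - 2 =
      (if G.degree v = 3 then 1 else 0) - (if G.degree v = 1 then 1 else 0) := fun v => by
    rcases hdeg v with h | h <;> simp [h]
  have hsum := hT.sum_degree_sub_two
  simp only [hpt, sum_sub_distrib, sum_boole] at hsum
  omega

theorem IsTree.exists_degree_eq_three_adj_two_leaves (hT : G.IsTree)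
    (hdeg : ∀ v, G.degree v = 1 ∨ G.degree v = 3) (hex : ∃ v, G.degree v = 3) :
    ∃ v, G.degree v = 3 ∧ ∃ l₁ l₂, l₁ ≠ l₂ ∧ G.Adj l₁ v ∧ G.Adj l₂ v ∧
      G.degree l₁ = 1 ∧ G.degree l₂ = 1 := by
  obtain ⟨w, hw⟩ := hex
  have hleaf_adj : ∀ l u, G.degree l = 1 → G.Adj l u → G.degree u = 3 := by
    intro l u hl hlu
    refine (hdeg u).resolve_left fun hu => ?_
    rcases hT.connected.eq_or_eq_of_adj_of_degree_eq_one hlu hl hu w with rfl | rfl <;> omega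
  by_contra! hnot
  have hle : #{v | G.degree v = 1} ≤ #{v | G.degree v = 3} := by
    refine card_le_card_of_forall_subsingleton G.Adj (fun l hl => ?_) fun v hv => ?_
    · have hl : G.degree l = 1 := (mem_filter.mp hl).2
      obtain ⟨u, hlu, -⟩ := degree_eq_one_iff_existsUnique_adj.mp hl
      exact ⟨u, mem_filter.mpr ⟨mem_univ u, hleaf_adj l u hl hlu⟩, hlu⟩
    · rintro l₁ ⟨hl₁, h₁⟩ l₂ ⟨hl₂, h₂⟩
      by_contra hne
      exact hnot v (mem_filter.mp hv).2 l₁ l₂ hne h₁ h₂ (mem_filter.mp hl₁).2 (mem_filter.mp hl₂).2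
  have := hT.card_degree_eq_one_of_degree_mem hdeg
  omega

theorem card_in_add_card_out (r : V → V → Prop) [DecidableRel r]
    (hr_adj : ∀ u v, r u v → G.Adj u v) (hr_orient : ∀ u v, G.Adj u v → (r u v ↔ ¬r v u))
    (v : V) : #{u | r u v} + #{u | r v u} = G.degree v := by
  classical
  rw [← card_union_of_disjoint, ← filter_or, ← card_neighborFinset_eq_degree]
  · congr 1
    ext u
    simp only [mem_filter, mem_univ, true_and, mem_neighborFinset]
    refine ⟨fun h => h.elim (fun h => (hr_adj u v h).symm) (hr_adj v u), fun h => ?_⟩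
    by_cases hvu : r v u
    · exact Or.inr hvu
    · exact Or.inl ((hr_orient u v h.symm).mpr hvu)
  · exact disjoint_filter.mpr fun u _ huv => (hr_orient u v (hr_adj u v huv)).mp huv

end SimpleGraph

theorem oriented_tree_exists_removable_trivalent_vertex_general
    {V : Type*} [Fintype V]
    (G : SimpleGraph V) [DecidableRel G.Adj]
    (hT : G.IsTree)
    (hdeg : ∀ v : V, G.degree v = 1 ∨ G.degree v = 3)
    (r : V → V → Prop) [DecidableRel r]
    (hr_adj : ∀ u v : V, r u v → G.Adj u v)
    (hr_orient : ∀ u v : V, G.Adj u v → (r u v ↔ ¬ r v u))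
    (hflow : ∀ v : V, G.degree v = 3 →
      1 ≤ (univ.filter fun u : V => r u v).card ∧
      1 ≤ (univ.filter fun u : V => r v u).card)
    (hex : ∃ v : V, G.degree v = 3) :
    ∃ v : V, G.degree v = 3 ∧
      (((univ.filter fun u : V => r v u).card = 2 ∧
          ∃ u : V, r v u ∧ G.degree u = 1) ∨
        ((univ.filter fun u : V => r u v).card = 2 ∧
          ∃ u : V, r u v ∧ G.degree u = 1)) := by
  classical
  obtain ⟨v, hv, l₁, l₂, hne, h₁, h₂, hl₁, hl₂⟩ := hT.exists_degree_eq_three_adj_two_leaves hdeg hex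
  have hleaf_side : ∀ C ⊆ G.neighborFinset v, #C = 2 → ∃ u ∈ C, G.degree u = 1 := by
    intro C hC hC2
    have hpair : {l₁, l₂} ⊆ G.neighborFinset v := by
      simp [insert_subset_iff, h₁.symm, h₂.symm]
    obtain ⟨u, hu⟩ := inter_nonempty_of_card_lt_card_add_card hC hpair
      (by rw [card_neighborFinset_eq_degree, hv, hC2, card_pair hne]; omega)
    simp only [mem_inter, mem_insert, mem_singleton] at hu
    obtain ⟨huC, rfl | rfl⟩ := hu
    exacts [⟨_, huC, hl₁⟩, ⟨_, huC, hl₂⟩]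
  have hout_sub : filter (r v ·) univ ⊆ G.neighborFinset v := fun u hu =>
    (mem_neighborFinset _ _ _).mpr (hr_adj v u (mem_filter.mp hu).2)
  have hin_sub : filter (r · v) univ ⊆ G.neighborFinset v := fun u hu =>
    (mem_neighborFinset _ _ _).mpr (hr_adj u v (mem_filter.mp hu).2).symm
  have hsum := card_in_add_card_out r hr_adj hr_orient v
  obtain ⟨hin, hout⟩ := hflow v hv
  refine ⟨v, hv, ?_⟩
  rcases (by omega : #{u | r v u} = 2 ∨ #{u | r u v} = 2) with h2 | h2
  · obtain ⟨u, hu, hu1⟩ := hleaf_side _ hout_sub h2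
    exact Or.inl ⟨h2, u, (mem_filter.mp hu).2, hu1⟩
  · obtain ⟨u, hu, hu1⟩ := hleaf_side _ hin_sub h2
    exact Or.inr ⟨h2, u, (mem_filter.mp hu).2, hu1⟩

/-- **Existence of a removable saddle (Lemma 6 of the paper).**
Let `T` be a finite tree in which every vertex has degree `1` or degree `3`,
equipped with an orientation `r` of its edges: for each pair of adjacent
vertices exactly one of the two directions is chosen.  Write
`inDeg v = #{u | r u v}` and `outDeg v = #{u | r v u}`.  Assume every
degree-`3` vertex has at least one incoming and at least one outgoing edge.
If `T` has a vertex of degree `3`, then there is a degree-`3` vertex `v`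
such that either `v` has out-degree `2` and some out-neighbour of `v` is a
leaf, or `v` has in-degree `2` and some in-neighbour of `v` is a leaf. -/
theorem oriented_tree_exists_removable_trivalent_vertex
    {V : Type*} [Fintype V] [DecidableEq V]
    (G : SimpleGraph V) [DecidableRel G.Adj]
    (hT : G.IsTree)
    (hdeg : ∀ v : V, G.degree v = 1 ∨ G.degree v = 3)
    (r : V → V → Prop) [DecidableRel r]
    (hr_adj : ∀ u v : V, r u v → G.Adj u v)
    (hr_orient : ∀ u v : V, G.Adj u v → (r u v ↔ ¬ r v u))
    (hflow : ∀ v : V, G.degree v = 3 →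
      1 ≤ (univ.filter fun u : V => r u v).card ∧
      1 ≤ (univ.filter fun u : V => r v u).card)
    (hex : ∃ v : V, G.degree v = 3) :
    ∃ v : V, G.degree v = 3 ∧
      (((univ.filter fun u : V => r v u).card = 2 ∧
          ∃ u : V, r v u ∧ G.degree u = 1) ∨
        ((univ.filter fun u : V => r u v).card = 2 ∧
          ∃ u : V, r u v ∧ G.degree u = 1)) :=
  oriented_tree_exists_removable_trivalent_vertex_general G hT hdeg r hr_adj hr_orient hflow hex
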